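/- (Theorem 4.3, uniform convergence of random graph embeddings) Let (X, d) be a metric space admitting, for every ε > 0, an ε-covering of cardinality at most (1 + 2/ε)^{dM}. Let μ be a probability measure on X, γ > 0, k(x,y) = E_{ω∼μ}[exp(-γ(d(x,ω)+d(ω,y)))], and k̃(x,y) = (1/R)Σᵢ exp(-γ(d(x,ωᵢ)+d(ωᵢ,y))) for i.i.d. ω₁,…,ω_R ∼ μ. Then for every ε > 0: P( sup_{x,y∈X} |k(x,y) - k̃(x,y)| ≤ ε ) ≥ 1 - 2·(1 + 16γ/ε)^{2dM}·exp(-R ε²/8). -/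

import Mathlib

/-!
Each feature `ω ↦ exp (-γ (d(x, ω) + d(ω, y)))` takes values in `[0, 1]`, so by Hoeffding the
empirical kernel `k̃(x, y)` is within `ε/2` of `k(x, y)` except with probability
`2 exp (-R ε² / 8)`, for each fixed pair. Both `k` and `k̃` are `γ`-Lipschitz in each argument
(since `exp` is `1`-Lipschitz on `(-∞, 0]`), so a union bound over all pairs of an
`ε/(8γ)`-net, of at most `(1 + 16γ/ε)^(2dM)` pairs, controls the supremum over all of `X × X`.
-/

open MeasureTheory ProbabilityTheory Finset
open scoped ENNReal NNReal

lemma Real.abs_exp_sub_exp_le_of_nonpos {a b : ℝ} (ha : a ≤ 0) (hb : b ≤ 0) :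
    |Real.exp a - Real.exp b| ≤ |a - b| := by
  wlog hba : b ≤ a generalizing a b
  · rw [abs_sub_comm, abs_sub_comm a]
    exact this hb ha (le_of_not_ge hba)
  rw [abs_of_nonneg (sub_nonneg.mpr (Real.exp_le_exp.mpr hba)), abs_of_nonneg (sub_nonneg.mpr hba)]
  -- `exp a - exp b = exp a * (1 - exp (b - a))` with `exp a ≤ 1` and `1 - exp (b - a) ≤ a - b`
  have h_factor : Real.exp b = Real.exp a * Real.exp (b - a) := by
    rw [← Real.exp_add]; ring_nf
  have h_tangent := Real.add_one_le_exp (b - a)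
  have h_exp_a : Real.exp a ≤ 1 := Real.exp_le_one_iff.mpr ha
  have h_exp_ba : Real.exp (b - a) ≤ 1 := Real.exp_le_one_iff.mpr (by linarith)
  nlinarith [Real.exp_pos a]

lemma abs_integral_sub_integral_le {α : Type*} [MeasurableSpace α] {μ : Measure α}
    [IsProbabilityMeasure μ] {f g : α → ℝ} (hf : Integrable f μ) (hg : Integrable g μ) {L : ℝ}
    (h : ∀ ω, |f ω - g ω| ≤ L) : |∫ ω, f ω ∂μ - ∫ ω, g ω ∂μ| ≤ L := by
  rw [← integral_sub hf hg]
  simpa using norm_integral_le_of_norm_le_const (μ := μ) (f := fun ω ↦ f ω - g ω) (ae_of_all _ h)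

lemma abs_mean_sub_mean_le {ι : Type*} (s : Finset ι) {f g : ι → ℝ} {L : ℝ} (hL : 0 ≤ L)
    (h : ∀ i ∈ s, |f i - g i| ≤ L) :
    |1 / #s * ∑ i ∈ s, f i - 1 / #s * ∑ i ∈ s, g i| ≤ L := by
  rw [← mul_sub, ← sum_sub_distrib, abs_mul, abs_of_nonneg (by positivity)]
  calc 1 / #s * |∑ i ∈ s, (f i - g i)| ≤ 1 / #s * (#s * L) := by
        gcongr
        exact (abs_sum_le_sum_abs _ _).trans (by simpa using sum_le_card_nsmul s _ L h)
    _ = (#s / #s : ℝ) * L := by ring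
    _ ≤ L := mul_le_of_le_one_left hL (div_self_le_one _)

lemma abs_sub_le_of_forall_mem_net {X : Type*} [PseudoMetricSpace X] {F G : X → X → ℝ}
    {E : Set X} {r L δ : ℝ} (hE : ∀ x, ∃ e ∈ E, dist x e ≤ r) (hL : 0 ≤ L)
    (hF : ∀ x y x' y', |F x y - F x' y'| ≤ L * (dist x x' + dist y y'))
    (hG : ∀ x y x' y', |G x y - G x' y'| ≤ L * (dist x x' + dist y y'))
    (h_net : ∀ e ∈ E, ∀ e' ∈ E, |F e e' - G e e'| ≤ δ) (x y : X) :
    |F x y - G x y| ≤ δ + 4 * L * r := by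
  obtain ⟨e, he, hxe⟩ := hE x
  obtain ⟨e', he', hye'⟩ := hE y
  have h_near : L * (dist x e + dist y e') ≤ 2 * L * r := by nlinarith
  have h_tri₁ := abs_sub_le (F x y) (F e e') (G x y)
  have h_tri₂ := abs_sub_le (F e e') (G e e') (G x y)
  have hG' := abs_sub_comm (G e e') (G x y) ▸ hG x y e e'
  linarith [h_net e he e' he', hF x y e e']

lemma MeasureTheory.ofReal_one_sub_le_measure {α : Type*} [MeasurableSpace α] {μ : Measure α}
    [IsProbabilityMeasure μ] {s t : Set α} {p : ℝ} (hp : 0 ≤ p) (hs : μ s ≤ ENNReal.ofReal p)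
    (hst : sᶜ ⊆ t) : ENNReal.ofReal (1 - p) ≤ μ t :=
  calc ENNReal.ofReal (1 - p) = 1 - ENNReal.ofReal p := by
        rw [ENNReal.ofReal_sub _ hp, ENNReal.ofReal_one]
    _ ≤ 1 - μ s := tsub_le_tsub_left hs 1
    _ ≤ μ sᶜ := tsub_le_iff_left.mpr (measure_univ (μ := μ) ▸ measure_univ_le_add_compl s)
    _ ≤ μ t := measure_mono hst

lemma MeasureTheory.measure_biUnion_biUnion_le {Ω ι : Type*} [MeasurableSpace Ω]
    {P : Measure Ω} (E : Finset ι) {B : ι → ι → Set Ω} {p : ℝ}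
    (hB : ∀ e ∈ E, ∀ e' ∈ E, P (B e e') ≤ ENNReal.ofReal p) :
    P (⋃ e ∈ E, ⋃ e' ∈ E, B e e') ≤ ENNReal.ofReal (#E ^ 2 * p) :=
  calc P (⋃ e ∈ E, ⋃ e' ∈ E, B e e') ≤ ∑ e ∈ E, ∑ e' ∈ E, P (B e e') :=
        (measure_biUnion_finset_le _ _).trans (sum_le_sum fun _ _ ↦ measure_biUnion_finset_le _ _)
    _ ≤ ∑ e ∈ E, ∑ e' ∈ E, ENNReal.ofReal p :=
        sum_le_sum fun e he ↦ sum_le_sum fun e' he' ↦ hB e he e' he'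
    _ = ENNReal.ofReal (#E ^ 2 * p) := by
        rw [ENNReal.ofReal_mul (by positivity), ENNReal.ofReal_pow (by positivity),
          ENNReal.ofReal_natCast]
        simp only [sum_const, nsmul_eq_mul]
        ring

namespace ProbabilityTheory

lemma HasSubgaussianMGF.measure_abs_sum_ge_le_of_iIndepFun {Ω ι : Type*}
    {m : MeasurableSpace Ω} {μ : Measure Ω} [IsFiniteMeasure μ] {X : ι → Ω → ℝ}
    (h_indep : iIndepFun X μ) {c : ι → ℝ≥0} {s : Finset ι}
    (h_subG : ∀ i ∈ s, HasSubgaussianMGF (X i) (c i) μ) {t : ℝ} (ht : 0 ≤ t) :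
    μ.real {ω | t ≤ |∑ i ∈ s, X i ω|} ≤ 2 * Real.exp (-t ^ 2 / (2 * ∑ i ∈ s, c i)) := by
  have h_split : {ω | t ≤ |∑ i ∈ s, X i ω|} ⊆
      {ω | t ≤ ∑ i ∈ s, X i ω} ∪ {ω | t ≤ ∑ i ∈ s, (-X i) ω} := fun ω hω ↦ by
    simpa [le_abs, sum_neg_distrib] using hω
  have h_neg : iIndepFun (fun i ↦ -X i) μ := h_indep.comp (fun _ ↦ Neg.neg) fun _ ↦ measurable_neg
  calc μ.real {ω | t ≤ |∑ i ∈ s, X i ω|}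
      ≤ μ.real {ω | t ≤ ∑ i ∈ s, X i ω} + μ.real {ω | t ≤ ∑ i ∈ s, (-X i) ω} :=
        (measureReal_mono h_split).trans (measureReal_union_le _ _)
    _ ≤ _ := by
      rw [two_mul]
      exact add_le_add (measure_sum_ge_le_of_iIndepFun h_indep h_subG ht)
        (measure_sum_ge_le_of_iIndepFun h_neg (fun i hi ↦ (h_subG i hi).neg) ht)

lemma measure_abs_sum_sub_integral_ge_le_of_mem_Icc {Ω ι : Type*} {m : MeasurableSpace Ω}
    {μ : Measure Ω} [IsProbabilityMeasure μ] {X : ι → Ω → ℝ}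
    (h_indep : iIndepFun X μ) (hm : ∀ i, AEMeasurable (X i) μ) {a b : ℝ}
    (hb : ∀ i, ∀ᵐ ω ∂μ, X i ω ∈ Set.Icc a b) (s : Finset ι) {t : ℝ} (ht : 0 ≤ t) :
    μ.real {ω | t ≤ |∑ i ∈ s, (X i ω - μ[X i])|} ≤
      2 * Real.exp (-2 * t ^ 2 / (#s * (b - a) ^ 2)) := by
  have h_indep' : iIndepFun (fun i ω ↦ X i ω - μ[X i]) μ := by
    exact h_indep.comp (fun i x ↦ x - μ[X i]) fun _ ↦ by fun_prop
  refine (HasSubgaussianMGF.measure_abs_sum_ge_le_of_iIndepFun h_indep'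
    (fun i _ ↦ hasSubgaussianMGF_of_mem_Icc (hm i) (hb i)) ht).trans_eq ?_
  simp only [sum_const, nsmul_eq_mul, NNReal.coe_mul, NNReal.coe_natCast, NNReal.coe_pow,
    NNReal.coe_div, coe_nnnorm, Real.norm_eq_abs, NNReal.coe_ofNat]
  rw [show 2 * (#s * (|b - a| / 2) ^ 2) = #s * (b - a) ^ 2 / 2 by rw [div_pow, sq_abs]; ring,
    div_div_eq_mul_div]
  ring_nf

lemma measure_lt_abs_integral_sub_sampleMean_le {Ω α : Type*} [MeasurableSpace Ω]
    [MeasurableSpace α] {P : Measure Ω} [IsProbabilityMeasure P] {μ : Measure α}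
    {R : ℕ} {W : Fin R → Ω → α} (hW : ∀ i, Measurable (W i)) (h_indep : iIndepFun W P)
    (h_law : ∀ i, P.map (W i) = μ) {f : α → ℝ} (hf : Measurable f)
    (hf_mem : ∀ x, f x ∈ Set.Icc 0 1) {δ : ℝ} (hδ : 0 ≤ δ) :
    P {ω | δ < |∫ x, f x ∂μ - 1 / (R : ℝ) * ∑ i, f (W i ω)|} ≤
      ENNReal.ofReal (2 * Real.exp (-2 * R * δ ^ 2)) := by
  have h_mean : ∀ i, P[f ∘ W i] = ∫ x, f x ∂μ := fun i ↦ by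
    rw [← h_law i, integral_map (hW i).aemeasurable hf.aestronglyMeasurable, Function.comp_def]
  have h_scale : ∀ ω, R * |∫ x, f x ∂μ - 1 / (R : ℝ) * ∑ i, f (W i ω)| =
      |∑ i, ((f ∘ W i) ω - P[f ∘ W i])| := fun ω ↦ by
    rcases Nat.eq_zero_or_pos R with rfl | hR
    · simp
    have hR' : (0 : ℝ) < R := Nat.cast_pos.mpr hR
    simp only [h_mean]
    rw [sum_sub_distrib, sum_const, card_univ, Fintype.card_fin, nsmul_eq_mul, abs_sub_comm,
      ← abs_of_pos hR', ← abs_mul]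
    simp only [abs_of_pos hR', Function.comp_apply]
    congr 1
    field_simp
  have h_sub : {ω | δ < |∫ x, f x ∂μ - 1 / (R : ℝ) * ∑ i, f (W i ω)|} ⊆
      {ω | R * δ ≤ |∑ i, ((f ∘ W i) ω - P[f ∘ W i])|} := fun ω hω ↦ by
    rw [Set.mem_ofPred_eq, ← h_scale]
    exact mul_le_mul_of_nonneg_left hω.le (Nat.cast_nonneg R)
  have h_hoeffding := measure_abs_sum_sub_integral_ge_le_of_mem_Icc (μ := P)
    (h_indep.comp (fun _ ↦ f) fun _ ↦ hf) (fun i ↦ (hf.comp (hW i)).aemeasurable)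
    (fun i ↦ ae_of_all _ fun ω ↦ hf_mem (W i ω)) univ (by positivity : (0 : ℝ) ≤ R * δ)
  refine (measure_mono h_sub).trans ?_
  rw [← ofReal_measureReal (measure_ne_top _ _)]
  refine ENNReal.ofReal_le_ofReal (h_hoeffding.trans_eq ?_)
  rcases Nat.eq_zero_or_pos R with rfl | hR
  · simp
  rw [card_univ, Fintype.card_fin, sub_zero, one_pow, mul_one]
  field_simp

end ProbabilityTheory

section ExpKernel

variable {X : Type*} [MetricSpace X] {γ : ℝ}

noncomputable def expFeature (γ : ℝ) (x y ω : X) : ℝ :=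
  Real.exp (-γ * (dist x ω + dist ω y))

noncomputable def expKernel [MeasurableSpace X] (μ : Measure X) (γ : ℝ) (x y : X) : ℝ :=
  ∫ ω, expFeature γ x y ω ∂μ

noncomputable def empiricalExpKernel {R : ℕ} (γ : ℝ) (w : Fin R → X) (x y : X) : ℝ :=
  1 / (R : ℝ) * ∑ i, expFeature γ x y (w i)

lemma neg_mul_dist_add_dist_nonpos (hγ : 0 ≤ γ) (x y ω : X) :
    -γ * (dist x ω + dist ω y) ≤ 0 := by
  rw [neg_mul, neg_nonpos]; positivity

lemma expFeature_mem_Icc (hγ : 0 ≤ γ) (x y ω : X) : expFeature γ x y ω ∈ Set.Icc 0 1 :=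
  ⟨(Real.exp_pos _).le, Real.exp_le_one_iff.mpr (neg_mul_dist_add_dist_nonpos hγ x y ω)⟩

lemma continuous_expFeature (γ : ℝ) (x y : X) : Continuous (expFeature γ x y) := by
  unfold expFeature; fun_prop

lemma abs_expFeature_sub_le (hγ : 0 ≤ γ) (x y x' y' ω : X) :
    |expFeature γ x y ω - expFeature γ x' y' ω| ≤ γ * (dist x x' + dist y y') := by
  refine (Real.abs_exp_sub_exp_le_of_nonpos (neg_mul_dist_add_dist_nonpos hγ x y ω)
    (neg_mul_dist_add_dist_nonpos hγ x' y' ω)).trans ?_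
  rw [← mul_sub, abs_mul, abs_neg, abs_of_nonneg hγ]
  gcongr
  calc |dist x ω + dist ω y - (dist x' ω + dist ω y')|
      ≤ |dist x ω - dist x' ω| + |dist ω y - dist ω y'| := by
        rw [add_sub_add_comm]; exact abs_add_le _ _
    _ ≤ dist x x' + dist y y' := by
        rw [dist_comm ω y, dist_comm ω y']
        exact add_le_add (abs_dist_sub_le _ _ _) (abs_dist_sub_le _ _ _)

lemma abs_expKernel_sub_le [MeasurableSpace X] [OpensMeasurableSpace X] (μ : Measure X)
    [IsProbabilityMeasure μ] (hγ : 0 ≤ γ) (x y x' y' : X) :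
    |expKernel μ γ x y - expKernel μ γ x' y'| ≤ γ * (dist x x' + dist y y') := by
  have h_int : ∀ x y, Integrable (expFeature γ x y) μ := fun x y ↦
    .of_mem_Icc 0 1 (continuous_expFeature γ x y).aemeasurable
      (ae_of_all _ (expFeature_mem_Icc hγ x y))
  exact abs_integral_sub_integral_le (h_int x y) (h_int x' y') (abs_expFeature_sub_le hγ x y x' y')

lemma abs_empiricalExpKernel_sub_le {R : ℕ} (w : Fin R → X) (hγ : 0 ≤ γ) (x y x' y' : X) :
    |empiricalExpKernel γ w x y - empiricalExpKernel γ w x' y'| ≤ γ * (dist x x' + dist y y') := by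
  simpa [empiricalExpKernel] using abs_mean_sub_mean_le univ (by positivity)
    fun i _ ↦ abs_expFeature_sub_le hγ x y x' y' (w i)

end ExpKernel

theorem stmt_15 {X : Type*} [MetricSpace X] [MeasurableSpace X] [OpensMeasurableSpace X]
    (d M : ℕ)
    (hcover : ∀ ε : ℝ, 0 < ε → ∃ E : Finset X,
      (E.card : ℝ) ≤ (1 + 2 / ε) ^ (d * M) ∧ ∀ x : X, ∃ e ∈ E, dist x e ≤ ε)
    (μ : Measure X) [IsProbabilityMeasure μ] (γ : ℝ) (hγ : 0 < γ)
    {Ω : Type*} [MeasureSpace Ω] [IsProbabilityMeasure (ℙ : Measure Ω)]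
    (R : ℕ) (W : Fin R → Ω → X) (hWmeas : ∀ i, Measurable (W i))
    (hindep : iIndepFun W ℙ)
    (hid : ∀ i, Measure.map (W i) ℙ = μ)
    (k : X → X → ℝ)
    (hk : ∀ x y, k x y = ∫ ω, Real.exp (-γ * (dist x ω + dist ω y)) ∂μ)
    (ktil : Ω → X → X → ℝ)
    (hktil : ∀ ω' x y, ktil ω' x y =
      (1 / (R : ℝ)) * ∑ i, Real.exp (-γ * (dist x (W i ω') + dist (W i ω') y)))
    (ε : ℝ) (hε : 0 < ε) :
    ENNReal.ofReal (1 - 2 * (1 + 16 * γ / ε) ^ (2 * d * M) *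
        Real.exp (-(R : ℝ) * ε ^ 2 / 8)) ≤
      ℙ {ω' | ∀ x y : X, |k x y - ktil ω' x y| ≤ ε} := by
  obtain rfl : k = expKernel μ γ := funext fun x ↦ funext (hk x)
  obtain rfl : ktil = fun ω' ↦ empiricalExpKernel γ (W · ω') :=
    funext fun ω' ↦ funext fun x ↦ funext (hktil ω' x)
  obtain ⟨E, hE_card, hE_cover⟩ := hcover (ε / (8 * γ)) (by positivity)
  rw [show 2 / (ε / (8 * γ)) = 16 * γ / ε by field_simp; ring] at hE_card
  have h_pair : ∀ e ∈ E, ∀ e' ∈ E,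
      ℙ {ω' | ε / 2 < |expKernel μ γ e e' - empiricalExpKernel γ (W · ω') e e'|} ≤
        ENNReal.ofReal (2 * Real.exp (-(R : ℝ) * ε ^ 2 / 8)) := fun e _ e' _ ↦ by
    refine (measure_lt_abs_integral_sub_sampleMean_le hWmeas hindep hid
      (continuous_expFeature γ e e').measurable (expFeature_mem_Icc hγ.le e e')
      (by positivity)).trans (ENNReal.ofReal_le_ofReal ?_)
    gcongr
    nlinarith [sq_nonneg ε, (Nat.cast_nonneg R : (0 : ℝ) ≤ R)]
  refine ofReal_one_sub_le_measure (by positivity)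
    ((measure_biUnion_biUnion_le E h_pair).trans
      (ENNReal.ofReal_le_ofReal ?_)) fun ω' hω' x y ↦ ?_
  · rw [show 2 * d * M = d * M * 2 by ring, pow_mul]
    nlinarith [pow_le_pow_left₀ (Nat.cast_nonneg #E) hE_card 2, Real.exp_pos (-(R : ℝ) * ε ^ 2 / 8)]
  · have h_net : ∀ e ∈ E, ∀ e' ∈ E,
        |expKernel μ γ e e' - empiricalExpKernel γ (W · ω') e e'| ≤ ε / 2 := by
      simpa using hω'
    have h_sup := abs_sub_le_of_forall_mem_net hE_cover hγ.le (abs_expKernel_sub_le μ hγ.le)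
      (abs_empiricalExpKernel_sub_le (W · ω') hγ.le) h_net x y
    rwa [show ε / 2 + 4 * γ * (ε / (8 * γ)) = ε by field_simp; ring] at h_sup
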